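/- arXiv:1310.2014 — 6 statements merged into one kernel-verified Lean document; each statement's English description precedes it below -/
import Mathlib

section
/- (Complementarity dual principle, one-dimensional instance.) Fix real parameters q, c, d, e. Suppose (x̄, μ̄, σ̄) ∈ ℝ³ is a critical point of Ξ₁(x, μ, σ) = ½(q + μσ)x² − cx − μ(½σ² + σd + e) (all three partial derivatives vanish at (x̄, μ̄, σ̄)), with μ̄ ≠ 0 and q + μ̄σ̄ ≠ 0. Then x̄ is a KKT point of the problem min{½qx² − cx : ½(½x² − d)² − e = 0}, i.e. h(x̄) = 0 and qx̄ − c + μ̄·h'(x̄) = 0 where h(x) = ½(½x² − d)² − e; moreover there is no duality gap: f(x̄) = Ξ₁(x̄, μ̄, σ̄) = P^d(μ̄, σ̄), where f(x) = ½qx² − cx and P^d(μ, σ) = −c²/(2(q + μσ)) − μ(½σ² + σd + e). -/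
/-!
The σ-partial of `Ξ₁` is `μ(½x² − d − σ)`, so `μ̄ ≠ 0` forces `σ̄ = ½x̄² − d`. With this, the
μ-partial `½σ̄x̄² − (½σ̄² + σ̄d + e)` becomes `h(x̄)`, and the x-partial `(q + μ̄σ̄)x̄ − c` becomes
the KKT equation because `h'(x̄) = (½x̄² − d)x̄ = σ̄x̄`. Finally `Ξ₁ = f − μ·∂_μΞ₁`, and substituting
`c = (q + μ̄σ̄)x̄` turns `−c²/(2(q + μ̄σ̄))` into the quadratic part `−½(q + μ̄σ̄)x̄²` of `Ξ₁`.
-/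

/-- The total complementarity function
`Ξ₁(x, μ, σ) = ½(q + μσ)x² − cx − μ(½σ² + σd + e)`. -/
noncomputable def Xi1 (q c d e : ℝ) (x μ σ : ℝ) : ℝ :=
  (1/2) * (q + μ * σ) * x ^ 2 - c * x - μ * (σ ^ 2 / 2 + σ * d + e)

section
variable (q c d e : ℝ)

theorem hasDerivAt_Xi1_x (x μ σ : ℝ) :
    HasDerivAt (fun x => Xi1 q c d e x μ σ) ((q + μ * σ) * x - c) x := by
  have := ((((hasDerivAt_id' x).pow 2).const_mul ((1/2) * (q + μ * σ))).sub
    ((hasDerivAt_id' x).const_mul c)).sub_const (μ * (σ ^ 2 / 2 + σ * d + e))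
  exact this.congr_deriv (by ring)

theorem hasDerivAt_Xi1_μ (x μ σ : ℝ) :
    HasDerivAt (fun μ => Xi1 q c d e x μ σ) (σ * x ^ 2 / 2 - (σ ^ 2 / 2 + σ * d + e)) μ := by
  have := ((((hasDerivAt_id' μ).mul_const σ).const_add q).const_mul (1/2 : ℝ)).mul_const (x ^ 2)
    |>.sub_const (c * x) |>.sub ((hasDerivAt_id' μ).mul_const (σ ^ 2 / 2 + σ * d + e))
  exact this.congr_deriv (by ring)

theorem hasDerivAt_Xi1_σ (x μ σ : ℝ) :
    HasDerivAt (fun σ => Xi1 q c d e x μ σ) (μ * (x ^ 2 / 2 - d - σ)) σ := by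
  have := ((((hasDerivAt_id' σ).const_mul μ).const_add q).const_mul (1/2 : ℝ)).mul_const (x ^ 2)
    |>.sub_const (c * x) |>.sub (((((hasDerivAt_pow 2 σ).div_const 2).add
      ((hasDerivAt_id' σ).mul_const d)).add_const e).const_mul μ)
  exact this.congr_deriv (by ring)

end

theorem hasDerivAt_doubleWell (d e x : ℝ) :
    HasDerivAt (fun x => (1/2) * ((1/2) * x ^ 2 - d) ^ 2 - e) (((1/2) * x ^ 2 - d) * x) x := by
  have := ((((hasDerivAt_pow 2 x).const_mul (1/2 : ℝ)).sub_const d).pow 2).const_mul (1/2 : ℝ)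
    |>.sub_const e
  exact this.congr_deriv (by ring)

theorem sq_mul_div_two_mul {K : Type*} [Field K] (a x : K) :
    (a * x) ^ 2 / (2 * a) = a * x ^ 2 / 2 := by
  calc (a * x) ^ 2 / (2 * a) = a * a / a * x ^ 2 / 2 := by ring
    _ = a * x ^ 2 / 2 := by rw [mul_self_div_self]

theorem complementarity_dual_principle_1d_general
    (q c d e : ℝ) (xb μb σb : ℝ)
    (hx : deriv (fun x => Xi1 q c d e x μb σb) xb = 0)
    (hμ : deriv (fun μ => Xi1 q c d e xb μ σb) μb = 0)
    (hσ : deriv (fun σ => Xi1 q c d e xb μb σ) σb = 0)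
    (hμ0 : μb ≠ 0) :
    ((1/2) * ((1/2) * xb ^ 2 - d) ^ 2 - e = 0 ∧
      q * xb - c
        + μb * deriv (fun x => (1/2) * ((1/2) * x ^ 2 - d) ^ 2 - e) xb = 0) ∧
    (1/2) * q * xb ^ 2 - c * xb = Xi1 q c d e xb μb σb ∧
    Xi1 q c d e xb μb σb
      = -(c ^ 2) / (2 * (q + μb * σb)) - μb * (σb ^ 2 / 2 + σb * d + e) := by
  rw [(hasDerivAt_Xi1_x q c d e xb μb σb).deriv] at hx
  rw [(hasDerivAt_Xi1_μ q c d e xb μb σb).deriv] at hμ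
  rw [(hasDerivAt_Xi1_σ q c d e xb μb σb).deriv] at hσ
  have hc : c = (q + μb * σb) * xb := by linear_combination -hx
  have hσb : σb = (1/2) * xb ^ 2 - d := by
    linear_combination -(mul_eq_zero.mp hσ).resolve_left hμ0
  refine ⟨⟨?_, ?_⟩, ?_, ?_⟩
  · rw [← hσb]
    linear_combination hμ + σb * hσb
  · rw [(hasDerivAt_doubleWell d e xb).deriv, ← hσb]
    linear_combination hx
  · rw [Xi1]
    linear_combination -μb * hμ
  · rw [Xi1, hc, neg_div, sq_mul_div_two_mul]
    ring

/-- Complementarity dual principle, one-dimensional instance: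
if `(x̄, μ̄, σ̄)` is a critical point of `Ξ₁` with `μ̄ ≠ 0` and
`q + μ̄σ̄ ≠ 0`, then `x̄` is a KKT point of
`min {½qx² − cx : ½(½x² − d)² − e = 0}` and there is no duality gap:
`f(x̄) = Ξ₁(x̄, μ̄, σ̄) = P^d(μ̄, σ̄)`. -/
theorem complementarity_dual_principle_1d
    (q c d e : ℝ) (xb μb σb : ℝ)
    (hx : deriv (fun x => Xi1 q c d e x μb σb) xb = 0)
    (hμ : deriv (fun μ => Xi1 q c d e xb μ σb) μb = 0)
    (hσ : deriv (fun σ => Xi1 q c d e xb μb σ) σb = 0)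
    (hμ0 : μb ≠ 0) (hG : q + μb * σb ≠ 0) :
    ((1/2) * ((1/2) * xb ^ 2 - d) ^ 2 - e = 0 ∧
      q * xb - c
        + μb * deriv (fun x => (1/2) * ((1/2) * x ^ 2 - d) ^ 2 - e) xb = 0) ∧
    (1/2) * q * xb ^ 2 - c * xb = Xi1 q c d e xb μb σb ∧
    Xi1 q c d e xb μb σb
      = -(c ^ 2) / (2 * (q + μb * σb)) - μb * (σb ^ 2 / 2 + σb * d + e) :=
  complementarity_dual_principle_1d_general q c d e xb μb σb hx hμ hσ hμ0
end

section
/- (Global optimality conditions, one-dimensional instance.) Fix real parameters q, c, d, e. Suppose (x̄, μ̄, σ̄) ∈ ℝ³ is a critical point of Ξ₁(x, μ, σ) = ½(q + μσ)x² − cx − μ(½σ² + σd + e) with μ̄ > 0 and q + μ̄σ̄ > 0. Then x̄ is a global minimizer of f(x) = ½qx² − cx over the feasible set {x ∈ ℝ : ½(½x² − d)² − e = 0}: for every x ∈ ℝ with ½(½x² − d)² − e = 0, one has f(x̄) ≤ f(x). -/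
namespace Xi1

noncomputable def objective (q c x : ℝ) : ℝ := (1/2) * q * x ^ 2 - c * x

noncomputable def constraint (d e x : ℝ) : ℝ := (1/2) * ((1/2) * x ^ 2 - d) ^ 2 - e

variable (q c d e : ℝ)

theorem eq_objective_add (x μ σ : ℝ) :
    Xi1 q c d e x μ σ =
      objective q c x + μ * (constraint d e x - (σ - ((1/2) * x ^ 2 - d)) ^ 2 / 2) := by
  unfold Xi1 objective constraint
  ring

theorem le_objective_add (x σ : ℝ) {μ : ℝ} (hμ : 0 ≤ μ) :
    Xi1 q c d e x μ σ ≤ objective q c x + μ * constraint d e x := by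
  rw [eq_objective_add]
  nlinarith [mul_nonneg hμ (sq_nonneg (σ - ((1/2) * x ^ 2 - d)))]

theorem le_of_stationary {μ σ xb : ℝ} (hG : 0 ≤ q + μ * σ)
    (hcrit : (q + μ * σ) * xb = c) (x : ℝ) :
    Xi1 q c d e xb μ σ ≤ Xi1 q c d e x μ σ := by
  have hdiff : Xi1 q c d e x μ σ - Xi1 q c d e xb μ σ = (q + μ * σ) / 2 * (x - xb) ^ 2 := by
    unfold Xi1
    linear_combination (x - xb) * hcrit
  nlinarith [mul_nonneg hG (sq_nonneg (x - xb))]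

theorem hasDerivAt_x (x μ σ : ℝ) :
    HasDerivAt (fun x => Xi1 q c d e x μ σ) ((q + μ * σ) * x - c) x := by
  have h := (((hasDerivAt_pow 2 x).const_mul ((1/2) * (q + μ * σ))).sub
    ((hasDerivAt_id' x).const_mul c)).sub_const (μ * (σ ^ 2 / 2 + σ * d + e))
  exact h.congr_deriv (by ring)

theorem hasDerivAt_mu (x μ σ : ℝ) :
    HasDerivAt (fun μ => Xi1 q c d e x μ σ)
      (constraint d e x - (σ - ((1/2) * x ^ 2 - d)) ^ 2 / 2) μ := by
  simp_rw [eq_objective_add]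
  simpa using ((hasDerivAt_id' μ).mul_const _).const_add (objective q c x)

theorem hasDerivAt_sigma (x μ σ : ℝ) :
    HasDerivAt (fun σ => Xi1 q c d e x μ σ) (-(μ * (σ - ((1/2) * x ^ 2 - d)))) σ := by
  simp_rw [eq_objective_add]
  have h := ((((hasDerivAt_id' σ).sub_const ((1/2) * x ^ 2 - d)).pow 2).div_const 2
    |>.const_sub (constraint d e x) |>.const_mul μ).const_add (objective q c x)
  exact h.congr_deriv (by ring)

end Xi1

/-- Global optimality conditions, one-dimensional instance: if
`(x̄, μ̄, σ̄)` is a critical point of `Ξ₁` with `μ̄ > 0` and `q + μ̄σ̄ > 0`,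
then `x̄` is a global minimizer of `f(x) = ½qx² − cx` over the feasible set
`{x : ½(½x² − d)² − e = 0}`. -/
theorem global_optimality_1d
    (q c d e : ℝ) (xb μb σb : ℝ)
    (hx : deriv (fun x => Xi1 q c d e x μb σb) xb = 0)
    (hμ : deriv (fun μ => Xi1 q c d e xb μ σb) μb = 0)
    (hσ : deriv (fun σ => Xi1 q c d e xb μb σ) σb = 0)
    (hμpos : 0 < μb) (hG : 0 < q + μb * σb) :
    ∀ x : ℝ, (1/2) * ((1/2) * x ^ 2 - d) ^ 2 - e = 0 →
      (1/2) * q * xb ^ 2 - c * xb ≤ (1/2) * q * x ^ 2 - c * x := by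
  intro x hfeas
  rw [(Xi1.hasDerivAt_x q c d e xb μb σb).deriv, sub_eq_zero] at hx
  rw [(Xi1.hasDerivAt_mu q c d e xb μb σb).deriv] at hμ
  rw [(Xi1.hasDerivAt_sigma q c d e xb μb σb).deriv, neg_eq_zero,
    mul_eq_zero_iff_left hμpos.ne', sub_eq_zero] at hσ
  rw [hσ, sub_self, zero_pow two_ne_zero, zero_div, sub_zero] at hμ
  calc Xi1.objective q c xb = Xi1 q c d e xb μb σb := by
        rw [Xi1.eq_objective_add, hμ, hσ]; ring
    _ ≤ Xi1 q c d e x μb σb := Xi1.le_of_stationary q c d e hG.le hx x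
    _ ≤ Xi1.objective q c x + μb * Xi1.constraint d e x :=
        Xi1.le_objective_add q c d e x σb hμpos.le
    _ = Xi1.objective q c x := by rw [Xi1.constraint, hfeas, mul_zero, add_zero]
end

section
/- (Inverse global optimality, one-dimensional instance.) Fix real parameters q, c, d, e. Suppose (x̄, μ̄, σ̄) ∈ ℝ³ is a critical point of Ξ₁(x, μ, σ) = ½(q + μσ)x² − cx − μ(½σ² + σd + e) with μ̄ < 0 and q + μ̄σ̄ < 0. Then x̄ is a global maximizer of f(x) = ½qx² − cx over the feasible set {x ∈ ℝ : ½(½x² − d)² − e = 0}: for every x ∈ ℝ with ½(½x² − d)² − e = 0, one has f(x) ≤ f(x̄). -/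
theorem deriv_quadratic (a b k y : ℝ) :
    deriv (fun y => a * y ^ 2 + b * y + k) y = 2 * a * y + b := by
  refine HasDerivAt.deriv ?_
  convert (((hasDerivAt_pow 2 y).const_mul a).add ((hasDerivAt_id y).const_mul b)).add_const k
    using 1
  simp; ring

section

variable (q c d e : ℝ)

theorem deriv_Xi1_x (x μ σ : ℝ) :
    deriv (fun x => Xi1 q c d e x μ σ) x = (q + μ * σ) * x - c := by
  have h : (fun x => Xi1 q c d e x μ σ) =
      fun x => (1/2) * (q + μ * σ) * x ^ 2 + (-c) * x + -(μ * (σ ^ 2 / 2 + σ * d + e)) := by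
    funext x; unfold Xi1; ring
  rw [h, deriv_quadratic]; ring

theorem deriv_Xi1_μ (x μ σ : ℝ) :
    deriv (fun μ => Xi1 q c d e x μ σ) μ = σ * x ^ 2 / 2 - (σ ^ 2 / 2 + σ * d + e) := by
  have h : (fun μ => Xi1 q c d e x μ σ) =
      fun μ => 0 * μ ^ 2 + (σ * x ^ 2 / 2 - (σ ^ 2 / 2 + σ * d + e)) * μ
        + ((1/2) * q * x ^ 2 - c * x) := by
    funext μ; unfold Xi1; ring
  rw [h, deriv_quadratic]; ring

theorem deriv_Xi1_σ (x μ σ : ℝ) :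
    deriv (fun σ => Xi1 q c d e x μ σ) σ = μ * (x ^ 2 / 2 - σ - d) := by
  have h : (fun σ => Xi1 q c d e x μ σ) =
      fun σ => (-μ / 2) * σ ^ 2 + μ * (x ^ 2 / 2 - d) * σ + ((1/2) * q * x ^ 2 - c * x - μ * e) := by
    funext σ; unfold Xi1; ring
  rw [h, deriv_quadratic]; ring

theorem Xi1_eq_add_mul (x μ σ : ℝ) :
    Xi1 q c d e x μ σ =
      (1/2) * q * x ^ 2 - c * x + μ * (σ * ((1/2) * x ^ 2 - d) - σ ^ 2 / 2 - e) := by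
  unfold Xi1; ring

theorem Xi1_le_of_stationary {x y μ σ : ℝ} (hconc : q + μ * σ ≤ 0)
    (hy : (q + μ * σ) * y - c = 0) : Xi1 q c d e x μ σ ≤ Xi1 q c d e y μ σ := by
  have hdiff : Xi1 q c d e y μ σ - Xi1 q c d e x μ σ = -(q + μ * σ) / 2 * (x - y) ^ 2 := by
    unfold Xi1; linear_combination (y - x) * hy
  have := mul_nonneg (neg_nonneg.2 hconc) (sq_nonneg (x - y))
  linarith

theorem mul_le_sq_of_sq_eq_sq {s t : ℝ} (h : t ^ 2 = s ^ 2) : s * t ≤ s ^ 2 := by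
  nlinarith [sq_nonneg (s - t)]

/-- Inverse global optimality, one-dimensional instance: if
`(x̄, μ̄, σ̄)` is a critical point of `Ξ₁` with `μ̄ < 0` and `q + μ̄σ̄ < 0`,
then `x̄` is a global maximizer of `f(x) = ½qx² − cx` over the feasible set
`{x : ½(½x² − d)² − e = 0}`. -/
theorem inverse_global_optimality_1d
    (q c d e : ℝ) (xb μb σb : ℝ)
    (hx : deriv (fun x => Xi1 q c d e x μb σb) xb = 0)
    (hμ : deriv (fun μ => Xi1 q c d e xb μ σb) μb = 0)
    (hσ : deriv (fun σ => Xi1 q c d e xb μb σ) σb = 0)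
    (hμneg : μb < 0) (hG : q + μb * σb < 0) :
    ∀ x : ℝ, (1/2) * ((1/2) * x ^ 2 - d) ^ 2 - e = 0 →
      (1/2) * q * x ^ 2 - c * x ≤ (1/2) * q * xb ^ 2 - c * xb := by
  intro x hfeas
  rw [deriv_Xi1_x] at hx
  rw [deriv_Xi1_μ] at hμ
  rw [deriv_Xi1_σ, mul_eq_zero, or_iff_right hμneg.ne] at hσ
  have hsq : ((1/2) * x ^ 2 - d) ^ 2 = σb ^ 2 := by
    linear_combination 2 * hfeas - 2 * hμ + 2 * σb * hσ
  have hgap : σb * ((1/2) * x ^ 2 - d) - σb ^ 2 / 2 - e ≤ 0 := by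
    have := mul_le_sq_of_sq_eq_sq hsq
    linear_combination this + hμ - σb * hσ
  calc (1/2) * q * x ^ 2 - c * x ≤ Xi1 q c d e x μb σb := by
        rw [Xi1_eq_add_mul]
        exact le_add_of_nonneg_right (mul_nonneg_of_nonpos_of_nonpos hμneg.le hgap)
    _ ≤ Xi1 q c d e xb μb σb := Xi1_le_of_stationary q c d e hG.le hx
    _ = (1/2) * q * xb ^ 2 - c * xb := by rw [Xi1_eq_add_mul]; linear_combination μb * hμ
end
end

section
/- (Complementarity dual principle, n-dimensional quadratic instance.) Let A be a symmetric n×n real matrix, c ∈ ℝⁿ, and d, e ∈ ℝ. Suppose (x̄, μ̄, σ̄) ∈ ℝⁿ × ℝ × ℝ is a critical point of Ξ₁(x, μ, σ) = ½⟨x, (A + μσI)x⟩ − ⟨c, x⟩ − μ(½σ² + σd + e), i.e. (A + μ̄σ̄I)x̄ = c, σ̄(½‖x̄‖²) = ½σ̄² + σ̄d + e, and μ̄(½‖x̄‖² − σ̄ − d) = 0, with μ̄ ≠ 0 and A + μ̄σ̄I invertible. Then x̄ is a KKT point of min{½⟨x, Ax⟩ − ⟨c, x⟩ : ½(½‖x‖²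 − d)² − e = 0}: h(x̄) = 0 and Ax̄ − c + μ̄∇h(x̄) = 0 where h(x) = ½(½‖x‖² − d)² − e; and there is no duality gap: f(x̄) = Ξ₁(x̄, μ̄, σ̄) = −½⟨c, (A + μ̄σ̄I)⁻¹c⟩ − μ̄(½σ̄² + σ̄d + e), where f(x) = ½⟨x, Ax⟩ − ⟨c, x⟩. -/
open Matrix

/-!
Since `μ̄ ≠ 0`, complementarity forces `σ̄ = ½‖x̄‖² − d`, i.e. `σ̄ = V'(ξ(x̄))`; the conjugate
equation then reduces to `σ̄²/2 = e`, which is the constraint `h(x̄) = 0`. The KKT equation is the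
stationarity equation `(A + μ̄σ̄I)x̄ = c` with `σ̄ x̄ = ∇(V ∘ ξ)(x̄)`, and eliminating `x̄ = (A + μ̄σ̄I)⁻¹c`
from `Ξ₁` gives the canonical dual value.
-/

section QuadraticForm

variable {ι K : Type*} [Fintype ι] [DecidableEq ι]

theorem Matrix.add_smul_one_mulVec [CommSemiring K] (A : Matrix ι ι K) (a : K) (x : ι → K) :
    (A + a • (1 : Matrix ι ι K)) *ᵥ x = A *ᵥ x + a • x := by
  rw [add_mulVec, smul_mulVec, one_mulVec]

theorem Matrix.half_dotProduct_mulVec_sub_eq_of_mulVec_eq [Field K] [CharZero K]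
    {M : Matrix ι ι K} (hM : IsUnit M) {x c : ι → K} (hx : M *ᵥ x = c) :
    (1/2) * (x ⬝ᵥ M *ᵥ x) - c ⬝ᵥ x = -(1/2) * (c ⬝ᵥ M⁻¹ *ᵥ c) := by
  have := hM.invertible
  rw [inv_mulVec_eq_vec hx.symm, hx, dotProduct_comm x c]
  ring

end QuadraticForm

theorem complementarity_dual_principle_nd_general
    (n : ℕ) (A : Matrix (Fin n) (Fin n) ℝ)
    (c : Fin n → ℝ) (d e : ℝ) (xb : Fin n → ℝ) (μb σb : ℝ)
    (h1 : (A + (μb * σb) • (1 : Matrix (Fin n) (Fin n) ℝ)).mulVec xb = c)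
    (h2 : σb * ((1/2) * (xb ⬝ᵥ xb)) = σb ^ 2 / 2 + σb * d + e)
    (h3 : μb * ((1/2) * (xb ⬝ᵥ xb) - σb - d) = 0)
    (hμ : μb ≠ 0)
    (hinv : IsUnit (A + (μb * σb) • (1 : Matrix (Fin n) (Fin n) ℝ))) :
    ((1/2) * ((1/2) * (xb ⬝ᵥ xb) - d) ^ 2 - e = 0 ∧
      A.mulVec xb - c + μb • (((1/2) * (xb ⬝ᵥ xb) - d) • xb) = 0) ∧
    (1/2) * (xb ⬝ᵥ A.mulVec xb) - c ⬝ᵥ xb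
      = (1/2) * (xb ⬝ᵥ (A + (μb * σb) • (1 : Matrix (Fin n) (Fin n) ℝ)).mulVec xb)
        - c ⬝ᵥ xb - μb * (σb ^ 2 / 2 + σb * d + e) ∧
    (1/2) * (xb ⬝ᵥ (A + (μb * σb) • (1 : Matrix (Fin n) (Fin n) ℝ)).mulVec xb)
        - c ⬝ᵥ xb - μb * (σb ^ 2 / 2 + σb * d + e)
      = -(1/2) * (c ⬝ᵥ (A + (μb * σb) • (1 : Matrix (Fin n) (Fin n) ℝ))⁻¹.mulVec c)
        - μb * (σb ^ 2 / 2 + σb * d + e) := by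
  have hσ : (1/2) * (xb ⬝ᵥ xb) - d = σb := by
    linarith [(mul_eq_zero.mp h3).resolve_left hμ]
  have he : σb ^ 2 / 2 = e := by
    linear_combination h2 - σb * hσ
  have hstat : A *ᵥ xb + (μb * σb) • xb = c := by
    rwa [← add_smul_one_mulVec]
  refine ⟨⟨by rw [hσ]; linarith, ?_⟩, ?_, ?_⟩
  · rw [hσ, smul_smul, ← hstat]
    abel
  · rw [add_smul_one_mulVec, dotProduct_add, dotProduct_smul, smul_eq_mul]
    linear_combination -(μb * σb) * hσ - μb * he
  · linarith [half_dotProduct_mulVec_sub_eq_of_mulVec_eq hinv h1]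

/-- Complementarity dual principle, n-dimensional quadratic
instance: a critical point `(x̄, μ̄, σ̄)` of
`Ξ₁(x, μ, σ) = ½⟨x,(A + μσI)x⟩ − ⟨c,x⟩ − μ(½σ² + σd + e)` with `μ̄ ≠ 0` and
`A + μ̄σ̄I` invertible yields a KKT point of
`min {½⟨x,Ax⟩ − ⟨c,x⟩ : ½(½‖x‖² − d)² − e = 0}` with zero duality gap. -/
theorem complementarity_dual_principle_nd
    (n : ℕ) (A : Matrix (Fin n) (Fin n) ℝ) (hA : A.IsSymm)
    (c : Fin n → ℝ) (d e : ℝ) (xb : Fin n → ℝ) (μb σb : ℝ)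
    (h1 : (A + (μb * σb) • (1 : Matrix (Fin n) (Fin n) ℝ)).mulVec xb = c)
    (h2 : σb * ((1/2) * (xb ⬝ᵥ xb)) = σb ^ 2 / 2 + σb * d + e)
    (h3 : μb * ((1/2) * (xb ⬝ᵥ xb) - σb - d) = 0)
    (hμ : μb ≠ 0)
    (hinv : IsUnit (A + (μb * σb) • (1 : Matrix (Fin n) (Fin n) ℝ))) :
    ((1/2) * ((1/2) * (xb ⬝ᵥ xb) - d) ^ 2 - e = 0 ∧
      A.mulVec xb - c + μb • (((1/2) * (xb ⬝ᵥ xb) - d) • xb) = 0) ∧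
    (1/2) * (xb ⬝ᵥ A.mulVec xb) - c ⬝ᵥ xb
      = (1/2) * (xb ⬝ᵥ (A + (μb * σb) • (1 : Matrix (Fin n) (Fin n) ℝ)).mulVec xb)
        - c ⬝ᵥ xb - μb * (σb ^ 2 / 2 + σb * d + e) ∧
    (1/2) * (xb ⬝ᵥ (A + (μb * σb) • (1 : Matrix (Fin n) (Fin n) ℝ)).mulVec xb)
        - c ⬝ᵥ xb - μb * (σb ^ 2 / 2 + σb * d + e)
      = -(1/2) * (c ⬝ᵥ (A + (μb * σb) • (1 : Matrix (Fin n) (Fin n) ℝ))⁻¹.mulVec c)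
        - μb * (σb ^ 2 / 2 + σb * d + e) :=
  complementarity_dual_principle_nd_general n A c d e xb μb σb h1 h2 h3 hμ hinv
end

section
/- (Global optimality conditions, n-dimensional quadratic instance.) Let A be a symmetric n×n real matrix, c ∈ ℝⁿ, d, e ∈ ℝ. Suppose (x̄, μ̄, σ̄) ∈ ℝⁿ × ℝ × ℝ is a critical point of Ξ₁(x, μ, σ) = ½⟨x, (A + μσI)x⟩ − ⟨c, x⟩ − μ(½σ² + σd + e), with μ̄ > 0 and A + μ̄σ̄I positive definite. Then x̄ is a global minimizer of f(x) = ½⟨x, Ax⟩ − ⟨c, x⟩ over the feasible set {x ∈ ℝⁿ : ½(½‖x‖² − d)² − e = 0}: for every x in this set, f(x̄) ≤ f(x). -/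
/-!
Write `B = A + μ̄σ̄ I` and `t = ½‖x‖² − d`. Criticality gives `B x̄ = c`, `½‖x̄‖² = σ̄ + d` and
`e = σ̄²/2`, so every feasible `x` has `t² = σ̄²`. Then
`f x - f x̄ = (q x - q x̄) + μ̄ (σ̄² - σ̄ t)` with `q x = ½⟨x, B x⟩ - ⟨c, x⟩`: the first bracket is
nonnegative because `x̄` is the unconstrained minimizer of the convex quadratic `q`, and the second
because `σ̄ t ≤ |σ̄| |t| = σ̄²` and `μ̄ > 0`.
-/

open Matrix

theorem mul_le_sq_of_sq_eq_sq_s14 {α : Type*} [CommRing α] [LinearOrder α] [IsStrictOrderedRing α]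
    {a b : α} (h : b ^ 2 = a ^ 2) : a * b ≤ a ^ 2 :=
  calc a * b ≤ |a * b| := le_abs_self _
    _ = |a| * |a| := by rw [abs_mul, (sq_eq_sq_iff_abs_eq_abs b a).1 h]
    _ = a ^ 2 := by rw [abs_mul_abs_self, sq]

namespace Matrix

variable {n R : Type*} [Fintype n]

theorem dotProduct_add_smul_one_mulVec [CommRing R] [DecidableEq n] (A : Matrix n n R) (s : R)
    (x : n → R) : x ⬝ᵥ (A + s • (1 : Matrix n n R)) *ᵥ x = x ⬝ᵥ A *ᵥ x + s * (x ⬝ᵥ x) := by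
  rw [add_mulVec, smul_mulVec, one_mulVec, dotProduct_add, dotProduct_smul, smul_eq_mul]

theorem IsSymm.dotProduct_sub_mulVec_sub [CommRing R] {B : Matrix n n R} (hB : B.IsSymm)
    {x₀ c : n → R} (h : B *ᵥ x₀ = c) (x : n → R) :
    (x - x₀) ⬝ᵥ B *ᵥ (x - x₀) = x ⬝ᵥ B *ᵥ x - 2 * (c ⬝ᵥ x) - (x₀ ⬝ᵥ B *ᵥ x₀ - 2 * (c ⬝ᵥ x₀)) := by
  have hc : x₀ ⬝ᵥ B *ᵥ x = c ⬝ᵥ x := by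
    rw [dotProduct_mulVec, ← mulVec_transpose, hB.eq, h]
  rw [mulVec_sub, dotProduct_sub, sub_dotProduct, sub_dotProduct, hc, h, dotProduct_comm x c,
    dotProduct_comm x₀ c]
  ring

theorem PosSemidef.quadratic_le_of_mulVec_eq {B : Matrix n n ℝ} (hB : B.PosSemidef)
    {x₀ c : n → ℝ} (h : B *ᵥ x₀ = c) (x : n → ℝ) :
    (1 / 2) * (x₀ ⬝ᵥ B *ᵥ x₀) - c ⬝ᵥ x₀ ≤ (1 / 2) * (x ⬝ᵥ B *ᵥ x) - c ⬝ᵥ x := by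
  have hsymm : B.IsSymm := isHermitian_iff_isSymm.1 hB.isHermitian
  have hnonneg := hB.dotProduct_mulVec_nonneg (x - x₀)
  simp only [star_trivial] at hnonneg
  rw [hsymm.dotProduct_sub_mulVec_sub h x] at hnonneg
  linarith

end Matrix

theorem global_optimality_nd_general
    (n : ℕ) (A : Matrix (Fin n) (Fin n) ℝ)
    (c : Fin n → ℝ) (d e : ℝ) (xb : Fin n → ℝ) (μb σb : ℝ)
    (h1 : (A + (μb * σb) • (1 : Matrix (Fin n) (Fin n) ℝ)).mulVec xb = c)
    (h2 : σb * ((1/2) * (xb ⬝ᵥ xb)) = σb ^ 2 / 2 + σb * d + e)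
    (h3 : μb * ((1/2) * (xb ⬝ᵥ xb) - σb - d) = 0)
    (hμpos : 0 < μb)
    (hpd : (A + (μb * σb) • (1 : Matrix (Fin n) (Fin n) ℝ)).PosDef) :
    ∀ x : Fin n → ℝ, (1/2) * ((1/2) * (x ⬝ᵥ x) - d) ^ 2 - e = 0 →
      (1/2) * (xb ⬝ᵥ A.mulVec xb) - c ⬝ᵥ xb
        ≤ (1/2) * (x ⬝ᵥ A.mulVec x) - c ⬝ᵥ x := by
  intro x hx
  have hxb : (1/2) * (xb ⬝ᵥ xb) = σb + d := by
    linarith [(mul_eq_zero.1 h3).resolve_left hμpos.ne']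
  have he : e = σb ^ 2 / 2 := by linear_combination σb * hxb - h2
  have ht : ((1/2) * (x ⬝ᵥ x) - d) ^ 2 = σb ^ 2 := by linear_combination 2 * hx + 2 * he
  have hquad := hpd.posSemidef.quadratic_le_of_mulVec_eq h1 x
  rw [dotProduct_add_smul_one_mulVec, dotProduct_add_smul_one_mulVec] at hquad
  have hdual := mul_le_mul_of_nonneg_left (mul_le_sq_of_sq_eq_sq_s14 ht) hμpos.le
  linear_combination hquad + hdual - μb * σb * hxb

/-- Global optimality conditions, n-dimensional quadratic
instance: a critical point `(x̄, μ̄, σ̄)` of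
`Ξ₁(x, μ, σ) = ½⟨x,(A + μσI)x⟩ − ⟨c,x⟩ − μ(½σ² + σd + e)` with `μ̄ > 0` and
`A + μ̄σ̄I` positive definite yields a global minimizer `x̄` of
`f(x) = ½⟨x,Ax⟩ − ⟨c,x⟩` over `{x : ½(½‖x‖² − d)² − e = 0}`. -/
theorem global_optimality_nd
    (n : ℕ) (A : Matrix (Fin n) (Fin n) ℝ) (hA : A.IsSymm)
    (c : Fin n → ℝ) (d e : ℝ) (xb : Fin n → ℝ) (μb σb : ℝ)
    (h1 : (A + (μb * σb) • (1 : Matrix (Fin n) (Fin n) ℝ)).mulVec xb = c)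
    (h2 : σb * ((1/2) * (xb ⬝ᵥ xb)) = σb ^ 2 / 2 + σb * d + e)
    (h3 : μb * ((1/2) * (xb ⬝ᵥ xb) - σb - d) = 0)
    (hμpos : 0 < μb)
    (hpd : (A + (μb * σb) • (1 : Matrix (Fin n) (Fin n) ℝ)).PosDef) :
    ∀ x : Fin n → ℝ, (1/2) * ((1/2) * (x ⬝ᵥ x) - d) ^ 2 - e = 0 →
      (1/2) * (xb ⬝ᵥ A.mulVec xb) - c ⬝ᵥ xb
        ≤ (1/2) * (x ⬝ᵥ A.mulVec x) - c ⬝ᵥ x :=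
  global_optimality_nd_general n A c d e xb μb σb h1 h2 h3 hμpos hpd
end

section
/- (Inverse global optimality, n-dimensional quadratic instance.) Let A be a symmetric n×n real matrix, c ∈ ℝⁿ, d, e ∈ ℝ. Suppose (x̄, μ̄, σ̄) ∈ ℝⁿ × ℝ × ℝ is a critical point of Ξ₁(x, μ, σ) = ½⟨x, (A + μσI)x⟩ − ⟨c, x⟩ − μ(½σ² + σd + e), with μ̄ < 0 and A + μ̄σ̄I negative definite. Then x̄ is a global maximizer of f(x) = ½⟨x, Ax⟩ − ⟨c, x⟩ over the feasible set {x ∈ ℝⁿ : ½(½‖x‖² − d)² − e = 0}: for every x in this set, f(x) ≤ f(x̄). -/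
/-!
Put `B = A + μ̄σ̄ I`. Since `-B` is positive semidefinite and `B x̄ = c`, the concave quadratic
`½⟨x, Bx⟩ − ⟨c, x⟩` is maximized at `x̄`, and `f(x)` differs from it by `−½μ̄σ̄‖x‖²`.
Criticality in `μ` and `σ` gives `½‖x̄‖² = σ̄ + d` and `σ̄² = 2e`, so feasible points satisfy
`½‖x‖² − d = ±σ̄`; on both branches `μ̄σ̄(½‖x‖² − ½‖x̄‖²) ≥ 0` because `μ̄ < 0`.
-/

open Matrix

theorem Matrix.PosSemidef.quadratic_le_of_mulVec_eq_s15 {ι : Type*} [Fintype ι]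
    {M : Matrix ι ι ℝ} (hM : M.PosSemidef) {x₀ b : ι → ℝ} (hx₀ : M *ᵥ x₀ = b) (x : ι → ℝ) :
    (1/2) * (x₀ ⬝ᵥ M *ᵥ x₀) - b ⬝ᵥ x₀ ≤ (1/2) * (x ⬝ᵥ M *ᵥ x) - b ⬝ᵥ x := by
  have hsymm : x₀ ⬝ᵥ M *ᵥ x = b ⬝ᵥ x := by
    rw [dotProduct_mulVec, ← mulVec_transpose, ← conjTranspose_eq_transpose_of_trivial,
      hM.isHermitian.eq, hx₀, dotProduct_comm]
  have hgap : 0 ≤ (x - x₀) ⬝ᵥ M *ᵥ (x - x₀) := by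
    simpa using hM.dotProduct_mulVec_nonneg (x - x₀)
  simp only [mulVec_sub, sub_dotProduct, dotProduct_sub, hsymm, hx₀] at hgap
  rw [hx₀]
  linarith [dotProduct_comm b x₀, dotProduct_comm b x]

theorem Matrix.dotProduct_add_smul_one_mulVec_s15 {ι R : Type*} [Fintype ι] [DecidableEq ι]
    [CommRing R] (A : Matrix ι ι R) (s : R) (x : ι → R) :
    x ⬝ᵥ (A + s • 1) *ᵥ x = x ⬝ᵥ A *ᵥ x + s * (x ⬝ᵥ x) := by
  rw [add_mulVec, smul_mulVec, one_mulVec, dotProduct_add, dotProduct_smul, smul_eq_mul]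

theorem mul_mul_add_le_of_sq_sub_eq_sq {μ σ d t : ℝ} (hμ : μ ≤ 0) (ht : (t - d) ^ 2 = σ ^ 2) :
    μ * σ * (σ + d) ≤ μ * σ * t := by
  rcases sq_eq_sq_iff_eq_or_eq_neg.mp ht with h | h
  · rw [show t = σ + d by linarith]
  · rw [show t = d - σ by linarith]
    linarith [mul_nonneg_of_nonpos_of_nonpos hμ (neg_nonpos.mpr (sq_nonneg σ))]

theorem inverse_global_optimality_nd_general
    (n : ℕ) (A : Matrix (Fin n) (Fin n) ℝ)
    (c : Fin n → ℝ) (d e : ℝ) (xb : Fin n → ℝ) (μb σb : ℝ)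
    (h1 : (A + (μb * σb) • (1 : Matrix (Fin n) (Fin n) ℝ)).mulVec xb = c)
    (h2 : σb * ((1/2) * (xb ⬝ᵥ xb)) = σb ^ 2 / 2 + σb * d + e)
    (h3 : μb * ((1/2) * (xb ⬝ᵥ xb) - σb - d) = 0)
    (hμneg : μb < 0)
    (hnd : (-(A + (μb * σb) • (1 : Matrix (Fin n) (Fin n) ℝ))).PosDef) :
    ∀ x : Fin n → ℝ, (1/2) * ((1/2) * (x ⬝ᵥ x) - d) ^ 2 - e = 0 →
      (1/2) * (x ⬝ᵥ A.mulVec x) - c ⬝ᵥ x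
        ≤ (1/2) * (xb ⬝ᵥ A.mulVec xb) - c ⬝ᵥ xb := by
  intro x hx
  have hnormb : (1/2) * (xb ⬝ᵥ xb) = σb + d := by
    linarith [(mul_eq_zero.mp h3).resolve_left hμneg.ne]
  have hσ : σb ^ 2 = 2 * e := by rw [hnormb] at h2; linear_combination 2 * h2
  have hshell : μb * σb * (σb + d) ≤ μb * σb * ((1/2) * (x ⬝ᵥ x)) :=
    mul_mul_add_le_of_sq_sub_eq_sq hμneg.le (by linear_combination 2 * hx - hσ)
  rw [← hnormb] at hshell
  have hconcave := hnd.posSemidef.quadratic_le_of_mulVec_eq_s15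
    (by rw [neg_mulVec, h1] : _ *ᵥ xb = -c) x
  simp only [neg_mulVec, dotProduct_neg, neg_dotProduct,
    dotProduct_add_smul_one_mulVec_s15] at hconcave
  linarith

/-- Inverse global optimality, n-dimensional quadratic
instance: a critical point `(x̄, μ̄, σ̄)` of
`Ξ₁(x, μ, σ) = ½⟨x,(A + μσI)x⟩ − ⟨c,x⟩ − μ(½σ² + σd + e)` with `μ̄ < 0` and
`A + μ̄σ̄I` negative definite yields a global maximizer `x̄` of
`f(x) = ½⟨x,Ax⟩ − ⟨c,x⟩` over `{x : ½(½‖x‖² − d)² − e = 0}`. -/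
theorem inverse_global_optimality_nd
    (n : ℕ) (A : Matrix (Fin n) (Fin n) ℝ) (hA : A.IsSymm)
    (c : Fin n → ℝ) (d e : ℝ) (xb : Fin n → ℝ) (μb σb : ℝ)
    (h1 : (A + (μb * σb) • (1 : Matrix (Fin n) (Fin n) ℝ)).mulVec xb = c)
    (h2 : σb * ((1/2) * (xb ⬝ᵥ xb)) = σb ^ 2 / 2 + σb * d + e)
    (h3 : μb * ((1/2) * (xb ⬝ᵥ xb) - σb - d) = 0)
    (hμneg : μb < 0)
    (hnd : (-(A + (μb * σb) • (1 : Matrix (Fin n) (Fin n) ℝ))).PosDef) :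
    ∀ x : Fin n → ℝ, (1/2) * ((1/2) * (x ⬝ᵥ x) - d) ^ 2 - e = 0 →
      (1/2) * (x ⬝ᵥ A.mulVec x) - c ⬝ᵥ x
        ≤ (1/2) * (xb ⬝ᵥ A.mulVec xb) - c ⬝ᵥ xb :=
  inverse_global_optimality_nd_general n A c d e xb μb σb h1 h2 h3 hμneg hnd
end
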